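/- arXiv:2308.14580 — 6 statements merged into one kernel-verified Lean document; each statement's English description precedes it below -/
import Mathlib

section
/- For d ≥ 0, the probability generating function Φ_{1,d}(t) = Σ_{k≥0} P(X = k) t^k of the number X of distinct roots in F_q of a uniformly random polynomial in F_q[x] of degree at most d satisfies Φ_{1,d}(t) = Σ_{i=0}^{d} ((q^{d+1-i} - 1)·C(q,i)/q^{d+1}) (t-1)^i + t^q / q^{d+1}. -/
set_option maxHeartbeats 800000


open Finset Polynomial

/-- The number of distinct zeros in `F` of the polynomial with coefficient vector
`c : Fin (d+1) → F`. -/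
def zeroCount {F : Type} [Field F] [Fintype F] [DecidableEq F] {d : ℕ}
    (c : Fin (d + 1) → F) : ℕ :=
  (univ.filter (fun a : F => ∑ i : Fin (d + 1), c i * a ^ (i : ℕ) = 0)).card


noncomputable def evalMap {F : Type} [Field F] (d : ℕ) (S : Finset F) :
    (Fin (d + 1) → F) →ₗ[F] (S → F) where
  toFun c := fun a => ∑ i : Fin (d + 1), c i * (a : F) ^ (i : ℕ)
  map_add' c c' := by funext a; simp [add_mul, Finset.sum_add_distrib]
  map_smul' r c := by funext a; simp [Finset.mul_sum, mul_assoc]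

lemma evalMap_surjective {F : Type} [Field F] [DecidableEq F] {d : ℕ} (S : Finset F)
    (hS : S.card ≤ d + 1) : Function.Surjective (evalMap d S) := by
  intro v
  classical
  set r : F → F := fun a => if h : a ∈ S then v ⟨a, h⟩ else 0 with hr
  set p := Lagrange.interpolate S id r with hp
  have hinj : Set.InjOn (id : F → F) S := Function.injective_id.injOn
  have hdeg : p.natDegree < d + 1 := by
    by_cases h0 : p = 0
    · simp [h0]
    · rw [Polynomial.natDegree_lt_iff_degree_lt h0]
      calc p.degree < S.card := Lagrange.degree_interpolate_lt r hinj
        _ ≤ (d + 1 : ℕ) := by exact_mod_cast hS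
  refine ⟨fun i => p.coeff i, ?_⟩
  funext a
  have h1 : p.eval (a : F) = v a := by
    have := Lagrange.eval_interpolate_at_node r hinj a.2
    simp only [id] at this
    rw [hp, this]
    simp [hr, a.2]
  have h2 := Polynomial.eval_eq_sum_range' hdeg (a : F)
  show ∑ i : Fin (d + 1), p.coeff i * (a : F) ^ (i : ℕ) = v a
  rw [Fin.sum_univ_eq_sum_range (fun i => p.coeff i * (a : F) ^ i), ← h2, h1]

lemma card_vanishing_le {F : Type} [Field F] [Fintype F] [DecidableEq F] (d : ℕ) (S : Finset F)
    (hS : S.card ≤ d + 1) :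
    (univ.filter (fun c : Fin (d + 1) → F =>
        ∀ a ∈ S, ∑ i : Fin (d + 1), c i * a ^ (i : ℕ) = 0)).card
      = Fintype.card F ^ (d + 1 - S.card) := by
  classical
  have hsurj := evalMap_surjective S hS
  have hker : ∀ c : Fin (d + 1) → F,
      (∀ a ∈ S, ∑ i : Fin (d + 1), c i * a ^ (i : ℕ) = 0) ↔
        c ∈ LinearMap.ker (evalMap d S) := by
    intro c
    rw [LinearMap.mem_ker]
    constructor
    · intro h; funext a; exact h a a.2
    · intro h a ha; exact congrFun h ⟨a, ha⟩
  have hcard : (univ.filter (fun c : Fin (d + 1) → F =>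
      ∀ a ∈ S, ∑ i : Fin (d + 1), c i * a ^ (i : ℕ) = 0)).card
      = Fintype.card (LinearMap.ker (evalMap d S)) := by
    rw [Fintype.card_subtype]
    apply Finset.card_bij (fun c _ => c)
    · intro c hc; simp only [mem_filter, mem_univ, true_and] at hc ⊢; exact (hker c).1 hc
    · intro a b _ _ h; exact h
    · intro b hb; simp only [mem_filter, mem_univ, true_and] at hb ⊢
      exact ⟨b, (hker b).2 hb, rfl⟩
  rw [hcard]
  have hfr : Module.finrank F (LinearMap.ker (evalMap d S)) = d + 1 - S.card := by
    have h1 := LinearMap.finrank_range_add_finrank_ker (evalMap d S)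
    rw [LinearMap.range_eq_top.mpr hsurj, finrank_top] at h1
    have h2 : Module.finrank F ({x // x ∈ S} → F) = S.card := by
      simp [Module.finrank_pi]
    have h3 : Module.finrank F (Fin (d + 1) → F) = d + 1 := by
      simp [Module.finrank_pi]
    rw [h2, h3] at h1
    exact Nat.eq_sub_of_add_eq' h1
  rw [Module.card_eq_pow_finrank (K := F) (V := LinearMap.ker (evalMap d S)), hfr]

lemma card_vanishing {F : Type} [Field F] [Fintype F] [DecidableEq F] (d : ℕ) (S : Finset F) :
    (univ.filter (fun c : Fin (d + 1) → F =>
        ∀ a ∈ S, ∑ i : Fin (d + 1), c i * a ^ (i : ℕ) = 0)).card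
      = Fintype.card F ^ (d + 1 - S.card) := by
  classical
  by_cases hS : S.card ≤ d + 1
  · exact card_vanishing_le d S hS
  · have h0 : d + 1 - S.card = 0 := by omega
    rw [h0, pow_zero]
    obtain ⟨T, hTS, hT⟩ := Finset.exists_subset_card_eq (le_of_lt (not_le.mp hS) : d + 1 ≤ S.card)
    have hsub : (univ.filter (fun c : Fin (d + 1) → F =>
        ∀ a ∈ S, ∑ i : Fin (d + 1), c i * a ^ (i : ℕ) = 0)) ⊆
        (univ.filter (fun c : Fin (d + 1) → F =>
        ∀ a ∈ T, ∑ i : Fin (d + 1), c i * a ^ (i : ℕ) = 0)) := by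
      intro c hc
      simp only [mem_filter, mem_univ, true_and] at hc ⊢
      exact fun a ha => hc a (hTS ha)
    have hT1 : (univ.filter (fun c : Fin (d + 1) → F =>
        ∀ a ∈ T, ∑ i : Fin (d + 1), c i * a ^ (i : ℕ) = 0)).card = 1 := by
      rw [card_vanishing_le d T (le_of_eq hT), hT, Nat.sub_self, pow_zero]
    have hle := le_trans (Finset.card_le_card hsub) (le_of_eq hT1)
    have hpos : 0 < (univ.filter (fun c : Fin (d + 1) → F =>
        ∀ a ∈ S, ∑ i : Fin (d + 1), c i * a ^ (i : ℕ) = 0)).card := by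
      apply Finset.card_pos.mpr
      exact ⟨fun _ => 0, by simp⟩
    exact le_antisymm hle hpos


lemma sum_choose_zeroCount {F : Type} [Field F] [Fintype F] [DecidableEq F] (d i : ℕ) :
    ∑ c : Fin (d + 1) → F, (zeroCount c).choose i
      = Fintype.card F ^ (d + 1 - i) * (Fintype.card F).choose i := by
  classical
  have h1 : ∀ c : Fin (d + 1) → F, (zeroCount c).choose i
      = ∑ S ∈ powersetCard i (univ : Finset F),
          if (∀ a ∈ S, ∑ j : Fin (d + 1), c j * a ^ (j : ℕ) = 0) then 1 else 0 := by
    intro c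
    rw [zeroCount, ← Finset.card_powersetCard]
    have : powersetCard i (univ.filter (fun a : F => ∑ j : Fin (d + 1), c j * a ^ (j : ℕ) = 0))
        = (powersetCard i (univ : Finset F)).filter
            (fun S => ∀ a ∈ S, ∑ j : Fin (d + 1), c j * a ^ (j : ℕ) = 0) := by
      ext S
      simp only [Finset.mem_powersetCard, Finset.mem_filter, Finset.subset_iff,
        Finset.mem_filter, Finset.mem_univ, true_and]
      tauto
    rw [this, Finset.card_filter]
  calc ∑ c : Fin (d + 1) → F, (zeroCount c).choose i
      = ∑ c : Fin (d + 1) → F, ∑ S ∈ powersetCard i (univ : Finset F),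
          if (∀ a ∈ S, ∑ j : Fin (d + 1), c j * a ^ (j : ℕ) = 0) then 1 else 0 :=
        Finset.sum_congr rfl fun c _ => h1 c
    _ = ∑ S ∈ powersetCard i (univ : Finset F), ∑ c : Fin (d + 1) → F,
          if (∀ a ∈ S, ∑ j : Fin (d + 1), c j * a ^ (j : ℕ) = 0) then 1 else 0 :=
        Finset.sum_comm
    _ = ∑ S ∈ powersetCard i (univ : Finset F), Fintype.card F ^ (d + 1 - i) := by
        refine Finset.sum_congr rfl fun S hS => ?_
        rw [← Finset.card_filter]
        have hSc : S.card = i := (Finset.mem_powersetCard.mp hS).2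
        rw [card_vanishing d S, hSc]
    _ = Fintype.card F ^ (d + 1 - i) * (Fintype.card F).choose i := by
        rw [Finset.sum_const, Finset.card_powersetCard, Finset.card_univ, smul_eq_mul, mul_comm]

lemma pow_eq_sum (n q : ℕ) (hn : n ≤ q) :
    (X : ℚ[X]) ^ n = ∑ i ∈ range (q + 1), (X - 1) ^ i * (n.choose i : ℚ[X]) := by
  conv_lhs => rw [← sub_add_cancel (X : ℚ[X]) 1]
  rw [add_pow]
  simp only [one_pow, mul_one]
  apply Finset.sum_subset (range_subset_range.mpr (by omega))
  intro i _ hi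
  rw [mem_range, not_lt] at hi
  rw [Nat.choose_eq_zero_of_lt (by omega), Nat.cast_zero, mul_zero]

lemma key_identity (F : Type) [Field F] [Fintype F] [DecidableEq F] (d : ℕ) :
    ∑ c : Fin (d + 1) → F, (X : ℚ[X]) ^ zeroCount c
      = ∑ i ∈ range (d + 1),
          (((Fintype.card F ^ (d + 1 - i) - 1) * (Fintype.card F).choose i : ℕ) : ℚ[X]) *
            (X - 1) ^ i
        + (X : ℚ[X]) ^ (Fintype.card F) := by
  classical
  set q := Fintype.card F with hq
  have hq1 : 1 ≤ q := Fintype.card_pos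
  have hz : ∀ c : Fin (d + 1) → F, zeroCount c ≤ q := fun c =>
    le_trans (Finset.card_filter_le _ _) (le_of_eq Finset.card_univ)
  set A : ℕ → ℚ[X] := fun i => (((q ^ (d + 1 - i) - 1) * q.choose i : ℕ) : ℚ[X]) * (X - 1) ^ i
    with hA
  have hAd : ∀ i, d + 1 ≤ i → A i = 0 := by
    intro i hi
    have : d + 1 - i = 0 := by omega
    simp [hA, this]
  have hAq : ∀ i, q + 1 ≤ i → A i = 0 := by
    intro i hi
    simp [hA, Nat.choose_eq_zero_of_lt (by omega : q < i)]
  have hrw : ∀ N : ℕ, ∑ i ∈ range (d + 1), A i = ∑ i ∈ range (N + 1), A i →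
      True := fun _ _ => trivial
  have hAsum : ∑ i ∈ range (d + 1), A i = ∑ i ∈ range (q + 1), A i := by
    have e1 : ∑ i ∈ range (d + 1), A i = ∑ i ∈ range (d + q + 1), A i :=
      Finset.sum_subset (range_subset_range.mpr (by omega)) fun i _ hi =>
        hAd i (by rw [mem_range, not_lt] at hi; omega)
    have e2 : ∑ i ∈ range (q + 1), A i = ∑ i ∈ range (d + q + 1), A i :=
      Finset.sum_subset (range_subset_range.mpr (by omega)) fun i _ hi =>
        hAq i (by rw [mem_range, not_lt] at hi; omega)
    rw [e1, e2]
  calc ∑ c : Fin (d + 1) → F, (X : ℚ[X]) ^ zeroCount c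
      = ∑ c : Fin (d + 1) → F, ∑ i ∈ range (q + 1),
          (X - 1) ^ i * ((zeroCount c).choose i : ℚ[X]) :=
        Finset.sum_congr rfl fun c _ => pow_eq_sum _ _ (hz c)
    _ = ∑ i ∈ range (q + 1), ∑ c : Fin (d + 1) → F,
          (X - 1) ^ i * ((zeroCount c).choose i : ℚ[X]) := Finset.sum_comm
    _ = ∑ i ∈ range (q + 1),
          (X - 1) ^ i * ((q ^ (d + 1 - i) * q.choose i : ℕ) : ℚ[X]) := by
        refine Finset.sum_congr rfl fun i _ => ?_
        rw [← Finset.mul_sum, ← Nat.cast_sum, sum_choose_zeroCount]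
    _ = ∑ i ∈ range (q + 1), (A i + (X - 1) ^ i * (q.choose i : ℚ[X])) := by
        refine Finset.sum_congr rfl fun i _ => ?_
        have hnat : (q ^ (d + 1 - i) - 1) * q.choose i + q.choose i
            = q ^ (d + 1 - i) * q.choose i := by
          have h1 : 1 ≤ q ^ (d + 1 - i) := Nat.one_le_pow _ _ (by omega)
          rw [Nat.sub_mul, one_mul]
          have := Nat.mul_le_mul_right (q.choose i) h1
          omega
        rw [hA, ← hnat]
        push_cast
        ring
    _ = ∑ i ∈ range (d + 1), A i + (X : ℚ[X]) ^ q := by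
        rw [Finset.sum_add_distrib, hAsum, ← pow_eq_sum q q le_rfl]

/-- The probability generating function of the number of distinct roots of a uniformly
random polynomial of degree at most `d` over `F_q` equals
`Σ_{i=0}^d ((q^{d+1-i}-1)·C(q,i)/q^{d+1}) (t-1)^i + t^q/q^{d+1}`. -/
theorem pgf_formula (F : Type) [Field F] [Fintype F] [DecidableEq F] (d : ℕ) :
    ∑ k ∈ range (Fintype.card F + 1),
        Polynomial.C
          (((univ.filter (fun c : Fin (d + 1) → F => zeroCount c = k)).card : ℚ) /
            (Fintype.card F : ℚ) ^ (d + 1)) * (Polynomial.X : ℚ[X]) ^ k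
      = ∑ i ∈ range (d + 1),
          Polynomial.C
            ((((Fintype.card F ^ (d + 1 - i) - 1) * (Fintype.card F).choose i : ℕ) : ℚ) /
              (Fintype.card F : ℚ) ^ (d + 1)) * ((Polynomial.X : ℚ[X]) - 1) ^ i
        + Polynomial.C (1 / (Fintype.card F : ℚ) ^ (d + 1)) *
            (Polynomial.X : ℚ[X]) ^ (Fintype.card F) := by
  
  classical
  set q := Fintype.card F with hq
  set qp : ℚ := (q : ℚ) ^ (d + 1) with hqp
  have hz : ∀ c : Fin (d + 1) → F, zeroCount c ≤ q := fun c =>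
    le_trans (Finset.card_filter_le _ _) (le_of_eq Finset.card_univ)
  have hfib : ∀ k, ∑ c ∈ univ.filter (fun c : Fin (d + 1) → F => zeroCount c = k),
      (X : ℚ[X]) ^ zeroCount c
      = ((univ.filter (fun c : Fin (d + 1) → F => zeroCount c = k)).card : ℚ[X]) * X ^ k := by
    intro k
    rw [Finset.sum_congr rfl (fun c hc => by rw [(Finset.mem_filter.mp hc).2]),
      Finset.sum_const, nsmul_eq_mul]
  have hL : ∑ k ∈ range (q + 1),
      C (((univ.filter (fun c : Fin (d + 1) → F => zeroCount c = k)).card : ℚ) / qp) *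
        (X : ℚ[X]) ^ k
      = C (1 / qp) * ∑ c : Fin (d + 1) → F, (X : ℚ[X]) ^ zeroCount c := by
    rw [← Finset.sum_fiberwise_of_maps_to
      (fun c _ => mem_range.mpr (Nat.lt_succ_of_le (hz c)))
      (fun c => (X : ℚ[X]) ^ zeroCount c), Finset.mul_sum]
    refine Finset.sum_congr rfl fun k _ => ?_
    rw [hfib k, show (((univ.filter (fun c : Fin (d + 1) → F => zeroCount c = k)).card : ℚ) / qp)
        = 1 / qp * ((univ.filter (fun c : Fin (d + 1) → F => zeroCount c = k)).card : ℚ) by ring,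
      map_mul, Polynomial.C_eq_natCast, mul_assoc]
  have hR : ∑ i ∈ range (d + 1),
        C ((((q ^ (d + 1 - i) - 1) * q.choose i : ℕ) : ℚ) / qp) * ((X : ℚ[X]) - 1) ^ i
        + C (1 / qp) * (X : ℚ[X]) ^ q
      = C (1 / qp) * (∑ i ∈ range (d + 1),
          (((q ^ (d + 1 - i) - 1) * q.choose i : ℕ) : ℚ[X]) * ((X : ℚ[X]) - 1) ^ i
          + (X : ℚ[X]) ^ q) := by
    rw [mul_add, Finset.mul_sum]
    congr 1
    refine Finset.sum_congr rfl fun i _ => ?_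
    rw [show ((((q ^ (d + 1 - i) - 1) * q.choose i : ℕ) : ℚ) / qp)
        = 1 / qp * (((q ^ (d + 1 - i) - 1) * q.choose i : ℕ) : ℚ) by ring,
      map_mul, Polynomial.C_eq_natCast, mul_assoc]
  rw [hL, hR, key_identity]
end

section
/- If d ≥ q - 1, the probability generating function of the number of distinct roots in F_q of a uniformly random polynomial in F_q[x] of degree at most d equals (1 + (t-1)/q)^q, as a polynomial in t. -/
/-!
Sending a coefficient vector to the function `F → F` it defines is additive, and for
`d + 1 ≥ q` it is surjective by Lagrange interpolation, so all its fibres have the same size.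
Hence the number of roots of a uniformly random polynomial is distributed like the number of
zeros of a uniformly random function `F → F`. The values of such a function are independent
and uniform, so its number of zeros is binomial with parameters `q` and `1/q`, whose
generating function is `(1 + (t - 1)/q)^q`.
-/

open Finset Polynomial

theorem AddMonoidHom.sum_comp_of_surjective {G H M : Type*} [AddGroup G] [Fintype G]
    [AddMonoid H] [Fintype H] [DecidableEq H] [AddCommMonoid M] (f : G →+ H)
    (hf : Function.Surjective f) (φ : H → M) :
    ∑ x, φ (f x) = #{x | f x = 0} • ∑ y, φ y := by
  rw [← sum_fiberwise univ f, smul_sum]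
  refine sum_congr rfl fun y _ => ?_
  rw [sum_congr rfl fun x hx => congrArg φ (mem_filter.mp hx).2, sum_const,
    AddMonoidHom.card_fiber_eq_of_mem_range f (hf y) ⟨0, map_zero f⟩]

theorem sum_range_card_filter_mul_pow {α R : Type*} [Fintype α] [CommSemiring R]
    (f : α → ℕ) {n : ℕ} (hf : ∀ a, f a ≤ n) (x : R) :
    ∑ k ∈ range (n + 1), (#{a | f a = k} : R) * x ^ k = ∑ a, x ^ f a := by
  rw [← sum_fiberwise_of_maps_to (g := f) (t := range (n + 1))
    fun a _ => mem_range.mpr (Nat.lt_succ_of_le (hf a))]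
  refine sum_congr rfl fun k _ => ?_
  rw [sum_congr rfl fun a ha => congrArg (x ^ ·) (mem_filter.mp ha).2, sum_const, nsmul_eq_mul]

theorem sum_pow_card_filter_eq {ι β R : Type*} [Fintype ι] [DecidableEq ι] [Fintype β]
    [DecidableEq β] [CommRing R] (b₀ : β) (x : R) :
    ∑ g : ι → β, x ^ #{i | g i = b₀} = (x - 1 + Fintype.card β) ^ Fintype.card ι := by
  have hfactor : ∑ b : β, (if b = b₀ then x else 1) = x - 1 + Fintype.card β := by
    rw [sum_ite, filter_eq', if_pos (mem_univ _), sum_const, sum_const, filter_ne',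
      card_erase_of_mem (mem_univ _), card_singleton, card_univ, one_nsmul, nsmul_one,
      Nat.cast_sub (Fintype.card_pos_iff.mpr ⟨b₀⟩), Nat.cast_one]
    ring
  rw [← hfactor, ← card_univ, ← prod_const, Fintype.prod_sum]
  refine sum_congr rfl fun g _ => ?_
  rw [prod_ite, prod_const, prod_const_one, mul_one]

def coeffEval (R : Type*) [CommSemiring R] (n : ℕ) : (Fin n → R) →+ (R → R) where
  toFun c a := ∑ i, c i * a ^ (i : ℕ)
  map_zero' := by ext; simp
  map_add' c c' := by ext; simp [add_mul, sum_add_distrib]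

theorem coeffEval_surjective {F : Type*} [Field F] [Fintype F] {n : ℕ}
    (hn : Fintype.card F ≤ n) : Function.Surjective (coeffEval F n) := by
  classical
  intro g
  set p := Lagrange.interpolate univ id g
  have hp : p.natDegree < n := by
    rcases eq_or_ne p 0 with h0 | h0
    · simpa [h0] using Fintype.card_pos.trans_le hn
    · rw [natDegree_lt_iff_degree_lt h0]
      exact (Lagrange.degree_interpolate_lt g (Set.injOn_id _)).trans_le (by exact_mod_cast hn)
  refine ⟨fun i => p.coeff i, funext fun a => ?_⟩
  change ∑ i : Fin n, p.coeff i * a ^ (i : ℕ) = g a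
  rw [Fin.sum_univ_eq_sum_range (fun i => p.coeff i * a ^ i), ← eval_eq_sum_range' hp]
  exact Lagrange.eval_interpolate_at_node g (Set.injOn_id _) (mem_univ a)

section zeroCount

variable {F : Type} [Field F] [Fintype F] [DecidableEq F]

theorem card_ker_coeffEval_mul {n : ℕ} (hn : Fintype.card F ≤ n) :
    #{c | coeffEval F n c = 0} * Fintype.card F ^ Fintype.card F = Fintype.card F ^ n := by
  simpa [mul_comm] using
    ((coeffEval F n).sum_comp_of_surjective (coeffEval_surjective hn) fun _ => (1 : ℕ)).symm

theorem zeroCount_le_card {d : ℕ} (c : Fin (d + 1) → F) : zeroCount c ≤ Fintype.card F :=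
  (card_filter_le _ _).trans_eq card_univ

theorem sum_pow_zeroCount {d : ℕ} (hd : Fintype.card F ≤ d + 1) {R : Type*} [CommRing R]
    (x : R) :
    ∑ c : Fin (d + 1) → F, x ^ zeroCount c
      = #{c | coeffEval F (d + 1) c = 0} • (x - 1 + Fintype.card F) ^ Fintype.card F := by
  rw [← sum_pow_card_filter_eq 0 x,
    ← (coeffEval F (d + 1)).sum_comp_of_surjective (coeffEval_surjective hd)]
  rfl

end zeroCount

/-- If `d ≥ q - 1`, the probability generating function of the number of distinct roots
of a uniformly random polynomial of degree at most `d` over `F_q` is `(1 + (t-1)/q)^q`. -/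
theorem pgf_stable (F : Type) [Field F] [Fintype F] [DecidableEq F] (d : ℕ)
    (hd : Fintype.card F - 1 ≤ d) :
    ∑ k ∈ range (Fintype.card F + 1),
        Polynomial.C
          (((univ.filter (fun c : Fin (d + 1) → F => zeroCount c = k)).card : ℚ) /
            (Fintype.card F : ℚ) ^ (d + 1)) * (Polynomial.X : ℚ[X]) ^ k
      = (1 + Polynomial.C ((Fintype.card F : ℚ))⁻¹ * ((Polynomial.X : ℚ[X]) - 1)) ^
          (Fintype.card F) := by
  set q := Fintype.card F
  have hqd : q ≤ d + 1 := by omega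
  have hq : (q : ℚ) ≠ 0 := Nat.cast_ne_zero.mpr Fintype.card_ne_zero
  set K := #{c | coeffEval F (d + 1) c = 0}
  have hK : (K : ℚ) ≠ 0 := Nat.cast_ne_zero.mpr (card_ne_zero.mpr ⟨0, by simp⟩)
  have hcard : (q : ℚ) ^ (d + 1) = K * q ^ q := by
    exact_mod_cast (card_ker_coeffEval_mul hqd).symm
  have hbase : 1 + C (q : ℚ)⁻¹ * (X - 1) = C (q : ℚ)⁻¹ * (X - 1 + (q : ℚ[X])) := by
    have hinv : C (q : ℚ)⁻¹ * (q : ℚ[X]) = 1 := by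
      rw [← map_natCast C, ← C_mul, inv_mul_cancel₀ hq, C_1]
    linear_combination -hinv
  calc _ = C ((q : ℚ) ^ (d + 1))⁻¹ *
        ∑ k ∈ range (q + 1), (#{c | zeroCount c = k} : ℚ[X]) * X ^ k := by
        rw [mul_sum]
        refine sum_congr rfl fun k _ => ?_
        rw [div_eq_inv_mul, C_mul, map_natCast, mul_assoc]
    _ = C ((q : ℚ) ^ (d + 1))⁻¹ * ((K : ℚ[X]) * (X - 1 + (q : ℚ[X])) ^ q) := by
        rw [sum_range_card_filter_mul_pow zeroCount zeroCount_le_card, sum_pow_zeroCount hqd,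
          nsmul_eq_mul]
    _ = _ := by
        rw [hbase, mul_pow, ← mul_assoc, ← C_pow, ← map_natCast C K, ← C_mul, hcard, mul_inv,
          mul_right_comm, inv_mul_cancel₀ hK, one_mul, inv_pow]
end

section
/- For d ≥ q - 1, the probability distribution of the number of distinct zeros in F_q^n of a uniformly random polynomial in F_q[x_1,...,x_n]_{(d,...,d)} is independent of d; that is, for every k, P(X_{n,d} = k) = P(X_{n,q-1} = k). -/
open Finset

/-- The number of distinct zeros in `F^n` of the multivariable polynomial with
coefficient vector `c : (Fin n → Fin (d+1)) → F`. -/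
def mzeroCount {F : Type} [Field F] [Fintype F] [DecidableEq F] {n d : ℕ}
    (c : (Fin n → Fin (d + 1)) → F) : ℕ :=
  (univ.filter (fun p : Fin n → F =>
    ∑ m : Fin n → Fin (d + 1), c m * ∏ i, p i ^ ((m i : ℕ)) = 0)).card

section Aux

set_option linter.unusedSectionVars false
variable {F : Type} [Field F] [Fintype F] [DecidableEq F] {n d : ℕ}

/-- The evaluation map from coefficient vectors to functions. -/
def ev (c : (Fin n → Fin (d + 1)) → F) : (Fin n → F) → F :=
  fun p => ∑ m : Fin n → Fin (d + 1), c m * ∏ i, p i ^ ((m i : ℕ))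

lemma ev_add (c₁ c₂ : (Fin n → Fin (d + 1)) → F) : ev (c₁ + c₂) = ev c₁ + ev c₂ := by
  funext p
  simp [ev, add_mul, Finset.sum_add_distrib]

lemma ev_sub (c₁ c₂ : (Fin n → Fin (d + 1)) → F) : ev (c₁ - c₂) = ev c₁ - ev c₂ := by
  funext p
  simp [ev, sub_mul, Finset.sum_sub_distrib]

lemma ev_zero : ev (0 : (Fin n → Fin (d + 1)) → F) = 0 := by
  funext p; simp [ev]

/-- One-variable interpolation: any function is represented by a polynomial of
degree `< d + 1` once `d ≥ q - 1`. -/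
lemma one_dim (hd : Fintype.card F - 1 ≤ d) (f : F → F) :
    ∃ g : Fin (d + 1) → F, ∀ x, ∑ j : Fin (d + 1), g j * x ^ (j : ℕ) = f x := by
  have hcard : Fintype.card F ≤ d + 1 := by
    have := Fintype.card_pos (α := F); omega
  set P := Lagrange.interpolate univ id f with hP
  have hinj : Set.InjOn (id : F → F) (univ : Finset F) := Function.injective_id.injOn
  have hdlt : P.degree < (univ : Finset F).card := Lagrange.degree_interpolate_lt f hinj
  have hdeg : P.natDegree < d + 1 := by
    rcases eq_or_ne P 0 with h | h
    · simp [h]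
    · have := (Polynomial.natDegree_lt_iff_degree_lt h).mpr hdlt
      simp only [Finset.card_univ] at this
      omega
  refine ⟨fun j => P.coeff (j : ℕ), fun x => ?_⟩
  have h1 : ∑ j : Fin (d + 1), P.coeff (j : ℕ) * x ^ (j : ℕ)
      = ∑ j ∈ Finset.range (d + 1), P.coeff j * x ^ j :=
    Fin.sum_univ_eq_sum_range (fun j => P.coeff j * x ^ j) (d + 1)
  rw [h1, ← Polynomial.eval_eq_sum_range' hdeg x]
  exact Lagrange.eval_interpolate_at_node f hinj (mem_univ x)

lemma ev_surj (hd : Fintype.card F - 1 ≤ d) :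
    Function.Surjective (ev (F := F) (n := n) (d := d)) := by
  intro f
  choose g hg using fun b : F => one_dim hd (fun x => if x = b then (1 : F) else 0)
  refine ⟨fun m => ∑ a : Fin n → F, f a * ∏ i, g (a i) (m i), ?_⟩
  funext p
  show ∑ m : Fin n → Fin (d + 1),
      (∑ a : Fin n → F, f a * ∏ i, g (a i) (m i)) * ∏ i, p i ^ ((m i : ℕ)) = f p
  have step1 : ∀ m : Fin n → Fin (d + 1),
      (∑ a : Fin n → F, f a * ∏ i, g (a i) (m i)) * ∏ i, p i ^ ((m i : ℕ))
        = ∑ a : Fin n → F, f a * ∏ i, (g (a i) (m i) * p i ^ ((m i : ℕ))) := by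
    intro m
    rw [Finset.sum_mul]
    refine Finset.sum_congr rfl fun a _ => ?_
    rw [mul_assoc, Finset.prod_mul_distrib]
  simp only [step1]
  rw [Finset.sum_comm]
  have step2 : ∀ a : Fin n → F,
      ∑ m : Fin n → Fin (d + 1), f a * ∏ i, (g (a i) (m i) * p i ^ ((m i : ℕ)))
        = f a * ∏ i, ∑ j : Fin (d + 1), g (a i) j * p i ^ ((j : ℕ)) := by
    intro a
    rw [← Finset.mul_sum, Fintype.prod_sum (fun i j => g (a i) j * p i ^ ((j : ℕ)))]
  simp only [step2]
  have step3 : ∀ a : Fin n → F,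
      (∏ i, ∑ j : Fin (d + 1), g (a i) j * p i ^ ((j : ℕ)))
        = if p = a then (1 : F) else 0 := by
    intro a
    have : ∀ i, (∑ j : Fin (d + 1), g (a i) j * p i ^ ((j : ℕ)))
        = if p i = a i then (1 : F) else 0 := fun i => hg (a i) (p i)
    simp only [this]
    by_cases h : p = a
    · subst h; simp
    · obtain ⟨i, hi⟩ : ∃ i, p i ≠ a i := by
        by_contra hc; push_neg at hc; exact h (funext hc)
      rw [if_neg h]
      exact Finset.prod_eq_zero (mem_univ i) (by simp [hi])
  simp only [step3, mul_ite, mul_one, mul_zero, Finset.sum_ite_eq, mem_univ, if_true]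

lemma fiber_card {f : (Fin n → F) → F} {c₀ : (Fin n → Fin (d + 1)) → F} (hc₀ : ev c₀ = f) :
    (univ.filter (fun c : (Fin n → Fin (d + 1)) → F => ev c = f)).card
      = (univ.filter (fun c : (Fin n → Fin (d + 1)) → F => ev c = 0)).card := by
  apply Finset.card_bij' (fun c _ => c - c₀) (fun c _ => c + c₀)
  · intro c hc
    simp only [mem_filter, mem_univ, true_and] at *
    rw [ev_sub, hc, hc₀, sub_self]
  · intro c hc
    simp only [mem_filter, mem_univ, true_and] at *
    rw [ev_add, hc, hc₀, zero_add]
  · intro c _; simp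
  · intro c _; simp

lemma count_mul (hs : Function.Surjective (ev (F := F) (n := n) (d := d)))
    (P : ((Fin n → F) → F) → Prop) [DecidablePred P] :
    (univ.filter (fun c : (Fin n → Fin (d + 1)) → F => P (ev c))).card
      = (univ.filter P).card
        * (univ.filter (fun c : (Fin n → Fin (d + 1)) → F => ev c = 0)).card := by
  have hsplit : univ.filter (fun c : (Fin n → Fin (d + 1)) → F => P (ev c))
      = (univ.filter P).biUnion
          (fun f => univ.filter (fun c : (Fin n → Fin (d + 1)) → F => ev c = f)) := by
    ext c
    simp only [mem_filter, mem_biUnion, mem_univ, true_and]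
    constructor
    · intro h; exact ⟨ev c, h, rfl⟩
    · rintro ⟨f, hf, rfl⟩; exact hf
  have hdisj : ∀ f ∈ univ.filter P, ∀ g ∈ univ.filter P, f ≠ g →
      Disjoint (univ.filter (fun c : (Fin n → Fin (d + 1)) → F => ev c = f))
        (univ.filter (fun c : (Fin n → Fin (d + 1)) → F => ev c = g)) := by
    intro f _ g _ hfg
    simp only [Finset.disjoint_left, mem_filter, mem_univ, true_and]
    rintro c rfl h
    exact hfg h
  rw [hsplit, Finset.card_biUnion hdisj]
  have heq : ∀ f ∈ univ.filter P,
      (univ.filter (fun c => ev c = f)).card = (univ.filter (fun c => ev c = (0 : (Fin n → F) → F))).card :=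
    fun f _ => fiber_card (hs f).choose_spec
  rw [Finset.sum_congr rfl heq, Finset.sum_const, smul_eq_mul]

lemma total_mul (hs : Function.Surjective (ev (F := F) (n := n) (d := d))) :
    Fintype.card ((Fin n → Fin (d + 1)) → F)
      = Fintype.card ((Fin n → F) → F)
        * (univ.filter (fun c : (Fin n → Fin (d + 1)) → F => ev c = 0)).card := by
  have h := count_mul hs (fun _ => True)
  simpa using h

lemma prob_eq (hd : Fintype.card F - 1 ≤ d) (k : ℕ) :
    ((univ.filter (fun c : (Fin n → Fin (d + 1)) → F => mzeroCount c = k)).card : ℚ) /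
        (Fintype.card F : ℚ) ^ ((d + 1) ^ n)
      = ((univ.filter (fun f : (Fin n → F) → F =>
            (univ.filter (fun p => f p = 0)).card = k)).card : ℚ)
        / (Fintype.card ((Fin n → F) → F) : ℚ) := by
  have hs := ev_surj (F := F) (n := n) (d := d) hd
  have h1 : (univ.filter (fun c : (Fin n → Fin (d + 1)) → F => mzeroCount c = k)).card
      = (univ.filter (fun f : (Fin n → F) → F =>
          (univ.filter (fun p => f p = 0)).card = k)).card
        * (univ.filter (fun c : (Fin n → Fin (d + 1)) → F => ev c = (0 : (Fin n → F) → F))).card :=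
    count_mul hs (fun f => (univ.filter (fun p => f p = 0)).card = k)
  have h2 := total_mul hs
  have hpow : (Fintype.card F : ℚ) ^ ((d + 1) ^ n)
      = (Fintype.card ((Fin n → Fin (d + 1)) → F) : ℚ) := by
    rw [Fintype.card_fun, Fintype.card_fun, Fintype.card_fin, Fintype.card_fin]
    push_cast
    ring
  have hK : (0 : ℚ) < ((univ.filter (fun c : (Fin n → Fin (d + 1)) → F => ev c = (0 : (Fin n → F) → F))).card : ℚ) := by
    have : (0 : (Fin n → Fin (d + 1)) → F) ∈
        univ.filter (fun c : (Fin n → Fin (d + 1)) → F => ev c = (0 : (Fin n → F) → F)) := by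
      simp [ev_zero]
    exact_mod_cast Finset.card_pos.mpr ⟨0, this⟩
  rw [h1, hpow, h2]
  push_cast
  rw [mul_div_mul_right _ _ (ne_of_gt hK)]

end Aux

/-- For `d ≥ q - 1`, the distribution of the number of distinct zeros of a uniformly
random polynomial of degree at most `d` in each variable does not depend on `d`:
it agrees with the distribution for `d = q - 1`. -/
theorem distribution_stable (F : Type) [Field F] [Fintype F] [DecidableEq F]
    (n d : ℕ) (hd : Fintype.card F - 1 ≤ d) (k : ℕ) :
    ((univ.filter (fun c : (Fin n → Fin (d + 1)) → F => mzeroCount c = k)).card : ℚ) /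
        (Fintype.card F : ℚ) ^ ((d + 1) ^ n)
      = ((univ.filter (fun c : (Fin n → Fin (Fintype.card F - 1 + 1)) → F =>
            mzeroCount c = k)).card : ℚ) /
          (Fintype.card F : ℚ) ^ ((Fintype.card F - 1 + 1) ^ n) := by
  rw [prob_eq hd k, prob_eq (le_refl (Fintype.card F - 1)) k]
end

section
/- If d ≥ q - 1, the probability generating function of the number X_{n,d} of distinct zeros in F_q^n of a uniformly random polynomial in F_q[x_1,...,x_n]_{(d,...,d)} equals (1 + (t-1)/q)^{q^n}, as a polynomial identity in t. -/
open Finset Polynomial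

section aux

variable {F : Type} [Field F] [Fintype F] [DecidableEq F] {n d : ℕ}

/-- Single-variable interpolation: indicator of a point as a polynomial of degree `≤ d`. -/
lemma exists_delta (d : ℕ) (hd : Fintype.card F - 1 ≤ d) (s : F) :
    ∃ g : Fin (d + 1) → F, ∀ x : F,
      ∑ j : Fin (d + 1), g j * x ^ (j : ℕ) = if x = s then 1 else 0 := by
  set Q : F[X] := Lagrange.basis Finset.univ id s with hQ
  have hinj : Set.InjOn (id : F → F) ↑(Finset.univ : Finset F) := fun a _ b _ h => h
  have hdeg : Q.natDegree < d + 1 := by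
    have h1 := Lagrange.natDegree_basis hinj (Finset.mem_univ s)
    rw [hQ, h1]
    have : (0:ℕ) < Fintype.card F := Fintype.card_pos
    simp only [Finset.card_univ]
    omega
  refine ⟨fun j => Q.coeff j, fun x => ?_⟩
  have hev := Polynomial.eval_eq_sum_range' hdeg x
  rw [Fin.sum_univ_eq_sum_range (fun j => Q.coeff j * x ^ j), ← hev]
  by_cases h : x = s
  · subst h; simpa using Lagrange.eval_basis_self hinj (Finset.mem_univ x)
  · simpa [h] using Lagrange.eval_basis_of_ne (v := id) (Ne.symm h) (Finset.mem_univ x)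

/-- The evaluation map, as a linear map from coefficient vectors to functions. -/
noncomputable def evalHom (F : Type) [Field F] [Fintype F] [DecidableEq F] (n d : ℕ) :
    ((Fin n → Fin (d + 1)) → F) →ₗ[F] ((Fin n → F) → F) where
  toFun c := fun p => ∑ m : Fin n → Fin (d + 1), c m * ∏ i, p i ^ ((m i : ℕ))
  map_add' c c' := by
    funext p
    simp [add_mul, Finset.sum_add_distrib]
  map_smul' r c := by
    funext p
    simp [Finset.mul_sum, mul_assoc]

lemma evalHom_delta (hd : Fintype.card F - 1 ≤ d) (a : Fin n → F) :
    ∃ c, evalHom F n d c = fun p => if p = a then (1:F) else 0 := by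
  choose gd hgd using exists_delta (F := F) d hd
  refine ⟨fun m => ∏ i, gd (a i) (m i), ?_⟩
  funext p
  show ∑ m : Fin n → Fin (d + 1), (∏ i, gd (a i) (m i)) * ∏ i, p i ^ ((m i : ℕ)) = _
  have h1 : ∀ m : Fin n → Fin (d + 1),
      (∏ i, gd (a i) (m i)) * ∏ i, p i ^ ((m i : ℕ))
        = ∏ i, (gd (a i) (m i) * p i ^ ((m i : ℕ))) := by
    intro m; rw [← Finset.prod_mul_distrib]
  rw [Finset.sum_congr rfl (fun m _ => h1 m),
    ← Fintype.prod_sum (f := fun i (j : Fin (d + 1)) => gd (a i) j * p i ^ (j : ℕ))]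
  have h2 : ∀ i, (∑ j : Fin (d + 1), gd (a i) j * p i ^ (j : ℕ))
      = if p i = a i then 1 else 0 := fun i => hgd (a i) (p i)
  rw [Finset.prod_congr rfl (fun i _ => h2 i)]
  by_cases h : p = a
  · subst h; simp
  · obtain ⟨i, hi⟩ : ∃ i, p i ≠ a i := by
      by_contra hc; push_neg at hc; exact h (funext hc)
    rw [if_neg h]
    exact Finset.prod_eq_zero (Finset.mem_univ i) (by simp [hi])

lemma evalHom_surj (hd : Fintype.card F - 1 ≤ d) :
    Function.Surjective (evalHom F n d) := by
  intro f
  choose ca hca using evalHom_delta (F := F) (n := n) (d := d) hd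
  refine ⟨∑ a : Fin n → F, f a • ca a, ?_⟩
  rw [map_sum]
  simp_rw [map_smul, hca]
  funext p
  simp [Finset.sum_apply, Pi.smul_apply, mul_ite]

end aux

/-- For `d ≥ q - 1`, the probability generating function of the number of distinct zeros
in `F_q^n` of a uniformly random polynomial of degree at most `d` in each variable is
`(1 + (t-1)/q)^(q^n)`. -/
theorem pgf_multivariable (F : Type) [Field F] [Fintype F] [DecidableEq F]
    (n d : ℕ) (hd : Fintype.card F - 1 ≤ d) :
    ∑ k ∈ range (Fintype.card F ^ n + 1),
        Polynomial.C
          (((univ.filter (fun c : (Fin n → Fin (d + 1)) → F => mzeroCount c = k)).card : ℚ) /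
            (Fintype.card F : ℚ) ^ ((d + 1) ^ n)) * (Polynomial.X : ℚ[X]) ^ k
      = (1 + Polynomial.C ((Fintype.card F : ℚ))⁻¹ * ((Polynomial.X : ℚ[X]) - 1)) ^
          (Fintype.card F ^ n) := by
  classical
  set q := Fintype.card F with hqdef
  have hq0 : 0 < q := Fintype.card_pos
  have hqQ : (q : ℚ) ≠ 0 := Nat.cast_ne_zero.mpr hq0.ne'
  set N := q ^ n with hN
  set D := (d + 1) ^ n with hD
  set T := evalHom F n d with hT
  -- number of zeros of a function
  set z : ((Fin n → F) → F) → ℕ := fun f => (univ.filter (fun p => f p = 0)).card with hz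
  have hmz : ∀ c, mzeroCount c = z (T c) := fun c => rfl
  -- fiber cardinality
  set K := (univ.filter (fun c : (Fin n → Fin (d + 1)) → F => T c = 0)).card with hK
  have hfiber : ∀ f : (Fin n → F) → F,
      (univ.filter (fun c : (Fin n → Fin (d + 1)) → F => T c = f)).card = K := by
    intro f
    obtain ⟨c0, hc0⟩ := evalHom_surj (F := F) (n := n) (d := d) hd f
    rw [hK]
    refine Finset.card_bij' (fun c _ => c - c0) (fun c _ => c + c0) ?_ ?_ ?_ ?_
    · intro c hc
      simp only [Finset.mem_filter, Finset.mem_univ, true_and] at hc ⊢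
      rw [map_sub, hc, hT, hc0, sub_self]
    · intro c hc
      simp only [Finset.mem_filter, Finset.mem_univ, true_and] at hc ⊢
      rw [map_add, hc, hT, hc0, zero_add]
    · intro c _; simp
    · intro c _; simp
  -- counting identity: K * q^N = q^D
  have hcount : K * q ^ N = q ^ D := by
    have h1 : ∑ f : (Fin n → F) → F,
        (univ.filter (fun c : (Fin n → Fin (d + 1)) → F => T c = f)).card
        = (univ : Finset ((Fin n → Fin (d + 1)) → F)).card := by
      rw [Finset.sum_card_fiberwise_eq_card_filter]
      simp
    rw [Finset.sum_congr rfl (fun f _ => hfiber f), Finset.sum_const, smul_eq_mul] at h1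
    have h2 : (univ : Finset ((Fin n → F) → F)).card = q ^ N := by
      simp [Finset.card_univ, Fintype.card_fun, hN, hqdef]
    have h3 : (univ : Finset ((Fin n → Fin (d + 1)) → F)).card = q ^ D := by
      simp [Finset.card_univ, Fintype.card_fun, hD, hqdef]
    rw [h2, h3] at h1
    rw [mul_comm]; exact h1
  -- the base polynomial
  set B : ℚ[X] := Polynomial.X - 1 + (q : ℚ[X]) with hB
  -- the generating sum over all functions
  have hTf : ∑ f : (Fin n → F) → F, (Polynomial.X : ℚ[X]) ^ z f = B ^ N := by
    have h1 : ∀ f : (Fin n → F) → F, (Polynomial.X : ℚ[X]) ^ z f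
        = ∏ a : Fin n → F, (if f a = 0 then (Polynomial.X : ℚ[X]) else 1) := by
      intro f
      rw [hz, ← Finset.prod_const, Finset.prod_filter]
    rw [Finset.sum_congr rfl (fun f _ => h1 f),
      ← Fintype.prod_sum (f := fun (_ : Fin n → F) (v : F) =>
        if v = 0 then (Polynomial.X : ℚ[X]) else 1)]
    have h2 : (∑ v : F, if v = 0 then (Polynomial.X : ℚ[X]) else 1) = B := by
      have h3 : ∀ v : F, (if v = 0 then (Polynomial.X : ℚ[X]) else 1)
          = (if v = 0 then (Polynomial.X : ℚ[X]) - 1 else 0) + 1 := by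
        intro v; by_cases h : v = 0 <;> simp [h]
      rw [Finset.sum_congr rfl (fun v _ => h3 v), Finset.sum_add_distrib,
        Finset.sum_ite_eq' univ (0 : F) (fun _ => (Polynomial.X : ℚ[X]) - 1)]
      simp [hB, hqdef, Finset.card_univ]
    rw [Finset.prod_congr rfl (fun a _ => h2), Finset.prod_const, Finset.card_univ]
    congr 1
    simp [hN, hqdef, Fintype.card_fun]
  -- grouping over fibers of T
  have hS : ∑ c : (Fin n → Fin (d + 1)) → F, (Polynomial.X : ℚ[X]) ^ mzeroCount c
      = K • B ^ N := by
    have h1 : ∑ c : (Fin n → Fin (d + 1)) → F, (Polynomial.X : ℚ[X]) ^ mzeroCount c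
        = ∑ f : (Fin n → F) → F, ∑ c ∈ univ.filter
            (fun c : (Fin n → Fin (d + 1)) → F => T c = f), (Polynomial.X : ℚ[X]) ^ z f := by
      rw [Finset.sum_fiberwise_of_maps_to' (fun c _ => Finset.mem_univ (T c))]
      exact Finset.sum_congr rfl (fun c _ => by rw [hmz c])
    rw [h1]
    rw [Finset.sum_congr rfl (fun f _ => by rw [Finset.sum_const, hfiber f]),
      ← Finset.smul_sum, hTf]
  -- grouping by the value of mzeroCount
  have hgroup : ∑ k ∈ range (N + 1),
      ((univ.filter (fun c : (Fin n → Fin (d + 1)) → F => mzeroCount c = k)).card : ℚ[X])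
        * (Polynomial.X : ℚ[X]) ^ k
      = ∑ c : (Fin n → Fin (d + 1)) → F, (Polynomial.X : ℚ[X]) ^ mzeroCount c := by
    have hmem : ∀ c : (Fin n → Fin (d + 1)) → F, mzeroCount c ∈ range (N + 1) := by
      intro c
      rw [Finset.mem_range, Nat.lt_succ_iff]
      calc mzeroCount c ≤ (univ : Finset (Fin n → F)).card := Finset.card_filter_le _ _
        _ = N := by simp [Finset.card_univ, Fintype.card_fun, hN, hqdef]
    rw [← Finset.sum_fiberwise_of_maps_to' (g := mzeroCount)
      (f := fun k => (Polynomial.X : ℚ[X]) ^ k) (fun c _ => hmem c)]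
    exact Finset.sum_congr rfl (fun k _ => by rw [Finset.sum_const, nsmul_eq_mul])
  -- final algebra
  have hLHS : ∑ k ∈ range (N + 1),
      Polynomial.C
        (((univ.filter (fun c : (Fin n → Fin (d + 1)) → F => mzeroCount c = k)).card : ℚ) /
          (q : ℚ) ^ D) * (Polynomial.X : ℚ[X]) ^ k
      = Polynomial.C (((q : ℚ) ^ D)⁻¹) * (K • B ^ N) := by
    rw [← hS, ← hgroup, Finset.mul_sum]
    refine Finset.sum_congr rfl (fun k _ => ?_)
    rw [div_eq_inv_mul, map_mul, mul_assoc]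
    simp
  rw [hLHS]
  have hRHS : (1 + Polynomial.C ((q : ℚ))⁻¹ * ((Polynomial.X : ℚ[X]) - 1)) ^ N
      = Polynomial.C (((q : ℚ)⁻¹) ^ N) * B ^ N := by
    rw [map_pow, ← mul_pow]
    congr 1
    rw [hB]
    have h1 : ((q : ℕ) : ℚ[X]) = Polynomial.C ((q : ℚ)) := by simp
    rw [h1, mul_add, ← map_mul, inv_mul_cancel₀ hqQ, map_one]
    ring
  rw [hRHS]
  rw [nsmul_eq_mul, ← mul_assoc]
  congr 1
  have hcast : (K : ℚ) * (q : ℚ) ^ N = (q : ℚ) ^ D := by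
    exact_mod_cast congrArg (Nat.cast : ℕ → ℚ) hcount
  have : Polynomial.C (((q : ℚ) ^ D)⁻¹) * (K : ℚ[X])
      = Polynomial.C (((q : ℚ) ^ D)⁻¹ * (K : ℚ)) := by simp
  rw [this]
  congr 1
  field_simp
  rw [← hcast, one_div, inv_pow, mul_assoc, mul_inv_cancel₀ (pow_ne_zero _ hqQ), mul_one]
end

section
/- If d ≥ q - 1, then the number of distinct zeros of a uniformly random polynomial in F_q[x_1,...,x_n]_{(d,...,d)} is distributed as the sum of q^n independent Bernoulli(1/q) random variables; equivalently, P(X_{n,d} = k) = C(q^n, k)·(1/q)^k·(1 - 1/q)^{q^n - k} for 0 ≤ k ≤ q^n. -/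
open Finset

section AuxStuff
set_option linter.unusedSectionVars false

namespace BinomAux

variable {F : Type} [Field F] [Fintype F] [DecidableEq F] {n d : ℕ}

def E (c : (Fin n → Fin (d + 1)) → F) : (Fin n → F) → F :=
  fun p => ∑ m : Fin n → Fin (d + 1), c m * ∏ i, p i ^ ((m i : ℕ))

lemma E_add (a b : (Fin n → Fin (d + 1)) → F) : E (a + b) = E a + E b := by
  funext p
  simp [E, add_mul, Finset.sum_add_distrib]

lemma E_sub (a b : (Fin n → Fin (d + 1)) → F) : E (a - b) = E a - E b := by
  funext p
  simp [E, sub_mul, Finset.sum_sub_distrib]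

lemma E_zero : E (0 : (Fin n → Fin (d + 1)) → F) = 0 := by
  funext p; simp [E]

lemma E_surj (hd : Fintype.card F - 1 ≤ d) :
    Function.Surjective (E (F := F) (n := n) (d := d)) := by
  classical
  intro f
  set P : MvPolynomial (Fin n) F :=
    ∑ a : Fin n → F, MvPolynomial.C (f a) * MvPolynomial.indicator a with hP
  have hmem : P ∈ MvPolynomial.restrictDegree (Fin n) F (Fintype.card F - 1) := by
    refine Submodule.sum_mem _ fun a _ => ?_
    rw [← MvPolynomial.smul_eq_C_mul]
    exact Submodule.smul_mem _ _ (MvPolynomial.indicator_mem_restrictDegree a)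
  have hdeg : ∀ s ∈ P.support, ∀ i, s i ≤ d := fun s hs i =>
    le_trans ((MvPolynomial.mem_restrictDegree _ _ _).1 hmem s hs i) hd
  have heval : ∀ p, MvPolynomial.eval p P = f p := by
    intro p
    rw [hP]
    simp only [map_sum, map_mul, MvPolynomial.eval_C]
    rw [Finset.sum_eq_single p]
    · rw [MvPolynomial.eval_indicator_apply_eq_one, mul_one]
    · intro b _ hb
      rw [MvPolynomial.eval_indicator_apply_eq_zero _ _ (Ne.symm hb), mul_zero]
    · simp
  set ι : (Fin n → Fin (d + 1)) → (Fin n →₀ ℕ) :=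
    fun m => Finsupp.equivFunOnFinite.symm fun i => (m i : ℕ) with hι
  have hι_apply : ∀ m i, ι m i = (m i : ℕ) := by intro m i; simp [hι]
  have hι_inj : Function.Injective ι := by
    intro a b hab
    funext i
    have := congrArg (fun s => s i) hab
    simp only [hι_apply] at this
    exact Fin.ext this
  refine ⟨fun m => P.coeff (ι m), ?_⟩
  funext p
  show ∑ m : Fin n → Fin (d + 1), P.coeff (ι m) * ∏ i, p i ^ ((m i : ℕ)) = f p
  rw [← heval p, MvPolynomial.eval_eq']
  have himage : P.support ⊆ Finset.univ.image ι := by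
    intro s hs
    refine Finset.mem_image.2 ⟨fun i => ⟨s i, Nat.lt_succ_of_le (hdeg s hs i)⟩,
      Finset.mem_univ _, ?_⟩
    ext i
    simp [hι_apply]
  rw [Finset.sum_subset himage (fun s _ hs => by
    rw [MvPolynomial.notMem_support_iff.1 hs, zero_mul])]
  rw [Finset.sum_image (fun a _ b _ h => hι_inj h)]
  refine Finset.sum_congr rfl fun m _ => ?_
  congr 1

end BinomAux

namespace BinomAux2

variable {F : Type} [Field F] [Fintype F] [DecidableEq F] {n d : ℕ}

-- fiber cardinality for additive map with surjectivity witness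
lemma card_fiber {α β : Type} [Fintype α] [DecidableEq β] [AddGroup α] [AddGroup β]
    (E : α → β) (hadd : ∀ a b, E (a + b) = E a + E b) (hsub : ∀ a b, E (a - b) = E a - E b)
    (f : β) (hf : ∃ c, E c = f) :
    (univ.filter fun c => E c = f).card = (univ.filter fun c => E c = 0).card := by
  obtain ⟨c0, hc0⟩ := hf
  refine Finset.card_nbij' (fun x => x - c0) (fun y => y + c0) ?_ ?_ ?_ ?_
  · intro x hx
    simp only [mem_coe, mem_filter, mem_univ, true_and] at hx ⊢
    rw [hsub, hx, hc0, sub_self]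
  · intro y hy
    simp only [mem_coe, mem_filter, mem_univ, true_and] at hy ⊢
    rw [hadd, hy, hc0, zero_add]
  · intro x _; simp
  · intro y _; simp

-- counting functions with exactly k zeros
lemma card_funs (α : Type) [Fintype α] [DecidableEq α] (k : ℕ) :
    (univ.filter fun f : α → F => (univ.filter fun p => f p = 0).card = k).card
      = (Fintype.card α).choose k * (Fintype.card F - 1) ^ (Fintype.card α - k) := by
  classical
  rw [Finset.card_eq_sum_card_fiberwise
    (f := fun f : α → F => univ.filter fun p => f p = 0)
    (t := Finset.powersetCard k univ)
    (fun f hf => by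
      simp only [mem_coe, mem_filter, mem_univ, true_and] at hf
      exact Finset.mem_powersetCard.2 ⟨Finset.subset_univ _, hf⟩)]
  have hstep : ∀ S ∈ Finset.powersetCard k (univ : Finset α),
      ((univ.filter fun f : α → F => (univ.filter fun p => f p = 0).card = k).filter
        (fun f => univ.filter (fun p => f p = 0) = S)).card
      = (Fintype.card F - 1) ^ (Fintype.card α - k) := by
    intro S hS
    obtain ⟨-, hSk⟩ := Finset.mem_powersetCard.1 hS
    have heq : ((univ.filter fun f : α → F => (univ.filter fun p => f p = 0).card = k).filter
        (fun f => univ.filter (fun p => f p = 0) = S))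
        = univ.filter (fun f : α → F => ∀ p, f p = 0 ↔ p ∈ S) := by
      ext f
      simp only [Finset.mem_filter, mem_univ, true_and]
      constructor
      · rintro ⟨-, h2⟩ p
        rw [← h2]; simp
      · intro h
        have hzs : univ.filter (fun p => f p = 0) = S := by
          ext p; simp [h p]
        exact ⟨by rw [hzs, hSk], hzs⟩
    rw [heq, ← Fintype.card_subtype]
    have e1 : {f : α → F // ∀ p, f p = 0 ↔ p ∈ S} ≃ ∀ p : α, {x : F // x = 0 ↔ p ∈ S} :=
      Equiv.subtypePiEquivPi (p := fun (p : α) (x : F) => x = 0 ↔ p ∈ S)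
    rw [Fintype.card_congr e1, Fintype.card_pi]
    have hfac : ∀ p : α, Fintype.card {x : F // x = 0 ↔ p ∈ S}
        = if p ∈ S then 1 else Fintype.card F - 1 := by
      intro p
      by_cases hp : p ∈ S
      · rw [if_pos hp, Fintype.card_congr (Equiv.subtypeEquivRight (q := fun x : F => x = 0) (fun x => by simp [hp]))]
        exact Fintype.card_subtype_eq (0 : F)
      · rw [if_neg hp, Fintype.card_congr (Equiv.subtypeEquivRight (q := fun x : F => ¬(x = 0))
          (fun x => by simp [hp]))]
        rw [Fintype.card_subtype_compl, Fintype.card_subtype_eq (0 : F)]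
    rw [Finset.prod_congr rfl (fun p _ => hfac p)]
    rw [← Finset.prod_mul_prod_compl S]
    rw [Finset.prod_congr rfl (fun p hp => if_pos hp), Finset.prod_const_one, one_mul]
    rw [Finset.prod_congr rfl (fun p hp => if_neg (Finset.mem_compl.1 hp)), Finset.prod_const]
    rw [Finset.card_compl, hSk]
  rw [Finset.sum_congr rfl hstep, Finset.sum_const, Finset.card_powersetCard, Finset.card_univ,
    smul_eq_mul]

end BinomAux2
end AuxStuff

set_option maxHeartbeats 2000000 in
open BinomAux BinomAux2 in
/-- For `d ≥ q - 1`, the number of distinct zeros of a uniformly random polynomial of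
degree at most `d` in each variable follows the binomial distribution
`Binomial(q^n, 1/q)`: `P(X = k) = C(q^n, k) (1/q)^k (1 - 1/q)^(q^n - k)`. -/
theorem binomial_distribution (F : Type) [Field F] [Fintype F] [DecidableEq F]
    (n d : ℕ) (hd : Fintype.card F - 1 ≤ d) (k : ℕ) (hk : k ≤ Fintype.card F ^ n) :
    ((univ.filter (fun c : (Fin n → Fin (d + 1)) → F => mzeroCount c = k)).card : ℚ) /
        (Fintype.card F : ℚ) ^ ((d + 1) ^ n)
      = ((Fintype.card F ^ n).choose k : ℚ) * (1 / (Fintype.card F : ℚ)) ^ k *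
          (1 - 1 / (Fintype.card F : ℚ)) ^ (Fintype.card F ^ n - k) := by
  classical
  set q := Fintype.card F with hq
  set N := q ^ n with hN
  have hq2 : 1 < q := Fintype.one_lt_card
  set K := (univ.filter fun c : (Fin n → Fin (d + 1)) → F => E c = 0).card with hK
  have hKpos : 0 < K := by
    rw [hK]
    refine Finset.card_pos.2 ⟨0, ?_⟩
    simp [E_zero]
  have hmz : ∀ c : (Fin n → Fin (d + 1)) → F,
      mzeroCount c = (univ.filter fun p => E c p = 0).card := fun c => rfl
  have hNcard : Fintype.card (Fin n → F) = N := by simp [hN, hq]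
  -- main cardinality computation
  have hmain : (univ.filter (fun c : (Fin n → Fin (d + 1)) → F => mzeroCount c = k)).card
      = (N.choose k * (q - 1) ^ (N - k)) * K := by
    have h1 : (univ.filter (fun c : (Fin n → Fin (d + 1)) → F => mzeroCount c = k))
        = univ.filter (fun c => (univ.filter fun p => E c p = 0).card = k) := by
      apply Finset.filter_congr
      intro c _
      rw [hmz c]
    rw [h1]
    rw [Finset.card_eq_sum_card_fiberwise (f := E)
      (t := univ.filter fun f : (Fin n → F) → F => (univ.filter fun p => f p = 0).card = k)
      (fun c hc => by
        simp only [mem_coe, mem_filter, mem_univ, true_and] at hc ⊢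
        exact hc)]
    have h2 : ∀ f ∈ univ.filter
        (fun f : (Fin n → F) → F => (univ.filter fun p => f p = 0).card = k),
        ((univ.filter (fun c : (Fin n → Fin (d + 1)) → F =>
          (univ.filter fun p => E c p = 0).card = k)).filter (fun c => E c = f)).card = K := by
      intro f hf
      simp only [mem_filter, mem_univ, true_and] at hf
      have h3 : ((univ.filter (fun c : (Fin n → Fin (d + 1)) → F =>
          (univ.filter fun p => E c p = 0).card = k)).filter (fun c => E c = f))
          = univ.filter (fun c => E c = f) := by
        ext c
        simp only [Finset.mem_filter, mem_univ, true_and]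
        constructor
        · rintro ⟨-, h⟩; exact h
        · intro h
          exact ⟨by rw [h]; exact hf, h⟩
      rw [h3, hK]
      exact card_fiber E E_add E_sub f (E_surj hd f)
    rw [Finset.sum_congr rfl h2, Finset.sum_const, smul_eq_mul]
    congr 1
    rw [card_funs (Fin n → F) k, hNcard]
  -- total cardinality
  have htotal : q ^ ((d + 1) ^ n) = q ^ N * K := by
    have h4 : (univ : Finset ((Fin n → Fin (d + 1)) → F)).card
        = ∑ f ∈ (univ : Finset ((Fin n → F) → F)),
            ((univ : Finset ((Fin n → Fin (d + 1)) → F)).filter (fun c => E c = f)).card :=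
      Finset.card_eq_sum_card_fiberwise (fun c _ => Finset.mem_univ (E c))
    have h5 : ∀ f ∈ (univ : Finset ((Fin n → F) → F)),
        ((univ : Finset ((Fin n → Fin (d + 1)) → F)).filter (fun c => E c = f)).card = K :=
      fun f _ => card_fiber E E_add E_sub f (E_surj hd f)
    rw [Finset.sum_congr rfl h5, Finset.sum_const, smul_eq_mul, Finset.card_univ,
      Finset.card_univ] at h4
    have h6 : Fintype.card ((Fin n → Fin (d + 1)) → F) = q ^ ((d + 1) ^ n) := by
      rw [Fintype.card_fun, Fintype.card_fun, Fintype.card_fin, Fintype.card_fin]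
    have h7 : Fintype.card ((Fin n → F) → F) = q ^ N := by
      rw [Fintype.card_fun, hNcard]
    rw [h6, h7] at h4
    exact h4
  -- rational arithmetic
  have hq0 : (q : ℚ) ≠ 0 := by positivity
  have hK0 : (K : ℚ) ≠ 0 := Nat.cast_ne_zero.2 hKpos.ne'
  have hcast1 : ((q : ℚ)) ^ ((d + 1) ^ n) = (q : ℚ) ^ N * K := by
    exact_mod_cast congrArg (Nat.cast : ℕ → ℚ) htotal
  rw [hmain, hcast1]
  push_cast [Nat.cast_sub hq2.le]
  have hsub : (1 : ℚ) - 1 / q = ((q : ℚ) - 1) / q := by field_simp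
  rw [hsub, div_pow, div_pow, one_pow]
  have hpow : (q : ℚ) ^ k * (q : ℚ) ^ (N - k) = (q : ℚ) ^ N := by
    rw [← pow_add, Nat.add_sub_cancel' hk]
  field_simp
  ring_nf
  rw [← hpow]
  ring
end

section
/- If d ≥ q - 1, the expected value of the number X_{n,d} of distinct zeros in F_q^n of a uniformly random polynomial in F_q[x_1,...,x_n]_{(d,...,d)} is q^{n-1}, and its variance is q^{n-1}(1 - 1/q). -/
open Finset Function

set_option linter.unusedSectionVars false

lemma card_ker_mul {F V W : Type} [Field F] [AddCommGroup V] [Module F V] [Fintype V]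
    [AddCommGroup W] [Module F W] [Fintype W] [DecidableEq W]
    (f : V →ₗ[F] W) (hf : Surjective f) :
    (univ.filter (fun x => f x = 0)).card * Fintype.card W = Fintype.card V := by
  classical
  have h1 : (univ.filter (fun x => f x = 0)).card = Nat.card (LinearMap.ker f) := by
    rw [Nat.card_eq_fintype_card, Fintype.card_subtype]
    congr 1
    exact Finset.filter_congr (fun x _ => by simp [LinearMap.mem_ker])
  have e := f.quotKerEquivOfSurjective hf
  have h2 : Nat.card (V ⧸ LinearMap.ker f) = Nat.card W := Nat.card_congr e.toEquiv
  have h3 := Submodule.card_eq_card_quotient_mul_card (LinearMap.ker f)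
  rw [h1, ← Nat.card_eq_fintype_card, ← Nat.card_eq_fintype_card, h3, h2]


variable {F : Type} [Field F] [Fintype F] [DecidableEq F] {n d : ℕ}

/-- Evaluation at a point as a linear map on coefficient vectors. -/
def evalLM (p : Fin n → F) : ((Fin n → Fin (d + 1)) → F) →ₗ[F] F where
  toFun c := ∑ m : Fin n → Fin (d + 1), c m * ∏ i, p i ^ ((m i : ℕ))
  map_add' c c' := by simp [add_mul, Finset.sum_add_distrib]
  map_smul' a c := by simp [Finset.mul_sum, mul_assoc]

lemma evalLM_single (p : Fin n → F) (m₀ : Fin n → Fin (d+1)) (a : F) :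
    evalLM p (Pi.single m₀ a) = a * ∏ i, p i ^ ((m₀ i : ℕ)) := by
  classical
  rw [evalLM]
  simp only [LinearMap.coe_mk, AddHom.coe_mk]
  rw [Finset.sum_eq_single m₀]
  · simp
  · intro b _ hb; simp [Pi.single_eq_of_ne hb]
  · simp

lemma evalLM_surjective (p : Fin n → F) : Surjective (evalLM (d := d) p) := by
  intro a
  refine ⟨Pi.single 0 a, ?_⟩
  rw [evalLM_single]
  simp

/-- coefficient vector of a univariate polynomial in variable `i`. -/
def cvec (u : Polynomial F) (i : Fin n) : (Fin n → Fin (d + 1)) → F :=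
  fun m => if ∀ j, j ≠ i → m j = 0 then u.coeff (m i) else 0

lemma evalLM_cvec (p : Fin n → F) (u : Polynomial F) (hu : u.natDegree ≤ d) (i : Fin n) :
    evalLM (d := d) p (cvec u i) = u.eval (p i) := by
  classical
  rw [evalLM]
  simp only [LinearMap.coe_mk, AddHom.coe_mk, cvec]
  rw [show (univ : Finset (Fin n → Fin (d+1))) =
      (univ : Finset (Fin (d+1))).image (fun k => Pi.single i k) ∪
      (univ.filter (fun m : Fin n → Fin (d+1) => ¬ ∀ j, j ≠ i → m j = 0)) from ?_]
  · rw [Finset.sum_union ?_]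
    · rw [Finset.sum_image ?_]
      · rw [Finset.sum_filter]
        have h2 : ∀ m : Fin n → Fin (d+1), (if ¬ ∀ j, j ≠ i → m j = 0 then
            (if ∀ j, j ≠ i → m j = 0 then u.coeff (m i) else 0) * ∏ j, p j ^ ((m j : ℕ)) else 0) = 0 := by
          intro m
          by_cases h : ∀ j, j ≠ i → m j = 0
          · rw [if_neg (not_not_intro h)]
          · rw [if_pos h, if_neg h, zero_mul]
        rw [Finset.sum_congr rfl (fun m _ => h2 m), Finset.sum_const_zero, add_zero]
        have h3 : ∀ k : Fin (d+1),
            (if ∀ j, j ≠ i → (Pi.single i k : Fin n → Fin (d+1)) j = 0 then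
              u.coeff ((Pi.single i k : Fin n → Fin (d+1)) i) else 0) *
              ∏ j, p j ^ (((Pi.single i k : Fin n → Fin (d+1)) j : ℕ)) =
            u.coeff k * p i ^ (k : ℕ) := by
          intro k
          have hc : ∀ j, j ≠ i → (Pi.single i k : Fin n → Fin (d+1)) j = 0 :=
            fun j hj => by simp [Pi.single_eq_of_ne hj]
          rw [if_pos hc, Pi.single_eq_same]
          congr 1
          rw [Finset.prod_eq_single i (fun j _ hj => by rw [Pi.single_eq_of_ne hj]; simp) (by simp)]
          rw [Pi.single_eq_same]
        rw [Finset.sum_congr rfl (fun k _ => h3 k)]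
        rw [Polynomial.eval_eq_sum_range' (Nat.lt_succ_of_le hu) (p i),
          ← Fin.sum_univ_eq_sum_range]
      · intro k _ k' _ h
        have := congrFun h i
        simpa using this
    · rw [Finset.disjoint_right]
      intro m hm hmi
      simp only [Finset.mem_filter, Finset.mem_univ, true_and] at hm
      simp only [Finset.mem_image, Finset.mem_univ, true_and] at hmi
      obtain ⟨k, rfl⟩ := hmi
      exact hm (fun j hj => Pi.single_eq_of_ne hj _)
  · ext m
    simp only [Finset.mem_univ, Finset.mem_union, Finset.mem_image, Finset.mem_filter, true_and,
      true_iff]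
    by_cases h : ∀ j, j ≠ i → m j = 0
    · left
      refine ⟨m i, ?_⟩
      ext j
      by_cases hj : j = i
      · subst hj; rw [Pi.single_eq_same]
      · rw [Pi.single_eq_of_ne hj, h j hj]
    · right; exact h

lemma exists_sep (hd : Fintype.card F - 1 ≤ d) {p p' : Fin n → F} (h : p ≠ p') :
    ∃ c : (Fin n → Fin (d + 1)) → F, evalLM p c = 1 ∧ evalLM p' c = 0 := by
  classical
  obtain ⟨i, hi⟩ : ∃ i, p i ≠ p' i := by
    by_contra hc
    push_neg at hc
    exact h (funext hc)
  set q := Fintype.card F with hq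
  have hq2 : 2 ≤ q := Fintype.one_lt_card
  set u : Polynomial F := 1 - (Polynomial.X - Polynomial.C (p i)) ^ (q - 1) with hu
  have hdeg : u.natDegree ≤ d := by
    refine le_trans (Polynomial.natDegree_sub_le _ _) ?_
    simp only [Polynomial.natDegree_one, Polynomial.natDegree_pow,
      Polynomial.natDegree_X_sub_C, mul_one]
    omega
  refine ⟨cvec u i, ?_, ?_⟩
  · rw [evalLM_cvec p u hdeg i]
    simp only [hu, Polynomial.eval_sub, Polynomial.eval_one, Polynomial.eval_pow,
      Polynomial.eval_X, Polynomial.eval_C, sub_self]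
    rw [zero_pow (by omega), sub_zero]
  · rw [evalLM_cvec p' u hdeg i]
    simp only [hu, Polynomial.eval_sub, Polynomial.eval_one, Polynomial.eval_pow,
      Polynomial.eval_X, Polynomial.eval_C]
    rw [FiniteField.pow_card_sub_one_eq_one _ (sub_ne_zero_of_ne (Ne.symm hi)), sub_self]

lemma pair_surjective (hd : Fintype.card F - 1 ≤ d) {p p' : Fin n → F} (h : p ≠ p') :
    Surjective ((evalLM (d := d) p).prod (evalLM p')) := by
  obtain ⟨c₁, hc₁, hc₁'⟩ := exists_sep hd h
  obtain ⟨c₂, hc₂, hc₂'⟩ := exists_sep hd (Ne.symm h)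
  rintro ⟨a, b⟩
  refine ⟨a • c₁ + b • c₂, ?_⟩
  simp [LinearMap.prod_apply, hc₁, hc₁', hc₂, hc₂']


lemma count_one (p : Fin n → F) :
    ((univ.filter (fun c : (Fin n → Fin (d + 1)) → F => evalLM p c = 0)).card : ℚ)
      = (Fintype.card F : ℚ) ^ ((d + 1) ^ n) / (Fintype.card F : ℚ) := by
  have h := card_ker_mul (evalLM (d := d) p) (evalLM_surjective p)
  have hq : (0:ℚ) < (Fintype.card F : ℚ) := by exact_mod_cast Fintype.card_pos
  rw [eq_div_iff hq.ne']
  have hV : (Fintype.card ((Fin n → Fin (d + 1)) → F) : ℚ)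
      = (Fintype.card F : ℚ) ^ ((d + 1) ^ n) := by
    rw [Fintype.card_fun, Fintype.card_fun, Fintype.card_fin, Fintype.card_fin]
    push_cast
    ring
  have := congrArg (fun k : ℕ => (k : ℚ)) h
  push_cast at this
  rw [this, hV]

lemma count_two (hd : Fintype.card F - 1 ≤ d) {p p' : Fin n → F} (h : p ≠ p') :
    ((univ.filter (fun c : (Fin n → Fin (d + 1)) → F =>
        evalLM p c = 0 ∧ evalLM p' c = 0)).card : ℚ)
      = (Fintype.card F : ℚ) ^ ((d + 1) ^ n) / (Fintype.card F : ℚ) ^ 2 := by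
  have h2 := card_ker_mul ((evalLM (d := d) p).prod (evalLM p')) (pair_surjective hd h)
  have hq : (0:ℚ) < (Fintype.card F : ℚ) := by exact_mod_cast Fintype.card_pos
  rw [eq_div_iff (by positivity)]
  have hfilter : (univ.filter (fun c : (Fin n → Fin (d + 1)) → F =>
        evalLM p c = 0 ∧ evalLM p' c = 0))
      = (univ.filter (fun c => (evalLM (d := d) p).prod (evalLM p') c = 0)) := by
    apply Finset.filter_congr
    intro c _
    simp [LinearMap.prod_apply, Prod.ext_iff]
  rw [hfilter]
  have hV : (Fintype.card ((Fin n → Fin (d + 1)) → F) : ℚ)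
      = (Fintype.card F : ℚ) ^ ((d + 1) ^ n) := by
    rw [Fintype.card_fun, Fintype.card_fun, Fintype.card_fin, Fintype.card_fin]
    push_cast
    ring
  have hW : (Fintype.card (F × F) : ℚ) = (Fintype.card F : ℚ) ^ 2 := by
    rw [Fintype.card_prod]
    push_cast
    ring
  have := congrArg (fun k : ℕ => (k : ℚ)) h2
  push_cast at this
  rw [← hW, this, hV]

/-- For `d ≥ q - 1`, the expected number of distinct zeros of a uniformly random
polynomial of degree at most `d` in each variable is `q^(n-1)`, and its variance is
`q^(n-1)·(1 - 1/q)`. -/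
theorem mean_and_variance_multivariable (F : Type) [Field F] [Fintype F] [DecidableEq F]
    (n d : ℕ) (hn : 1 ≤ n) (hd : Fintype.card F - 1 ≤ d) :
    (∑ c : (Fin n → Fin (d + 1)) → F, (mzeroCount c : ℚ)) /
        (Fintype.card F : ℚ) ^ ((d + 1) ^ n) = (Fintype.card F : ℚ) ^ (n - 1) ∧
    (∑ c : (Fin n → Fin (d + 1)) → F, (mzeroCount c : ℚ) ^ 2) /
        (Fintype.card F : ℚ) ^ ((d + 1) ^ n)
      - ((∑ c : (Fin n → Fin (d + 1)) → F, (mzeroCount c : ℚ)) /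
          (Fintype.card F : ℚ) ^ ((d + 1) ^ n)) ^ 2
      = (Fintype.card F : ℚ) ^ (n - 1) * (1 - 1 / (Fintype.card F : ℚ)) := by
  classical
  set Q : ℚ := (Fintype.card F : ℚ) with hQdef
  have hq2 : 2 ≤ Fintype.card F := Fintype.one_lt_card
  have hQ : Q ≠ 0 := by
    rw [hQdef]; exact_mod_cast (by omega : Fintype.card F ≠ 0)
  set N := (d + 1) ^ n with hN
  -- indicator form of mzeroCount
  have hmz : ∀ c : (Fin n → Fin (d + 1)) → F,
      (mzeroCount c : ℚ) = ∑ p : Fin n → F, (if evalLM (d := d) p c = 0 then (1:ℚ) else 0) := by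
    intro c
    rw [mzeroCount, Finset.card_filter]
    push_cast
    refine Finset.sum_congr rfl fun p _ => ?_
    simp only [evalLM, LinearMap.coe_mk, AddHom.coe_mk]
    exact if_congr Iff.rfl rfl rfl
  -- point count
  have hcardPts : (Fintype.card (Fin n → F) : ℚ) = Q ^ n := by
    rw [Fintype.card_fun, Fintype.card_fin, hQdef]
    push_cast
    ring
  -- the mean sum
  have hsum1 : (∑ c : (Fin n → Fin (d + 1)) → F, (mzeroCount c : ℚ)) = Q ^ n * (Q ^ N / Q) := by
    rw [Finset.sum_congr rfl fun c _ => hmz c, Finset.sum_comm]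
    have : ∀ p : Fin n → F,
        (∑ c : (Fin n → Fin (d + 1)) → F, (if evalLM (d := d) p c = 0 then (1:ℚ) else 0))
          = Q ^ N / Q := by
      intro p
      rw [← count_one p, Finset.card_filter]
      push_cast
      rfl
    rw [Finset.sum_congr rfl fun p _ => this p, Finset.sum_const, Finset.card_univ,
      nsmul_eq_mul, hcardPts]
  -- the second-moment sum
  have hsum2 : (∑ c : (Fin n → Fin (d + 1)) → F, (mzeroCount c : ℚ) ^ 2)
      = Q ^ n * (Q ^ N / Q) + Q ^ n * (Q ^ n - 1) * (Q ^ N / Q ^ 2) := by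
    have hsq : ∀ c : (Fin n → Fin (d + 1)) → F, (mzeroCount c : ℚ) ^ 2
        = ∑ p : Fin n → F, ∑ p' : Fin n → F,
            (if evalLM (d := d) p c = 0 ∧ evalLM (d := d) p' c = 0 then (1:ℚ) else 0) := by
      intro c
      rw [hmz, sq, Finset.sum_mul_sum]
      refine Finset.sum_congr rfl fun p _ => Finset.sum_congr rfl fun p' _ => ?_
      by_cases h1 : evalLM (d := d) p c = 0 <;> by_cases h2 : evalLM (d := d) p' c = 0 <;>
        simp [h1, h2]
    rw [Finset.sum_congr rfl fun c _ => hsq c, Finset.sum_comm]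
    have hswap : ∀ p : Fin n → F,
        (∑ c : (Fin n → Fin (d + 1)) → F, ∑ p' : Fin n → F,
          (if evalLM (d := d) p c = 0 ∧ evalLM (d := d) p' c = 0 then (1:ℚ) else 0))
        = ∑ p' : Fin n → F, ((univ.filter (fun c : (Fin n → Fin (d + 1)) → F =>
            evalLM p c = 0 ∧ evalLM p' c = 0)).card : ℚ) := by
      intro p
      rw [Finset.sum_comm]
      refine Finset.sum_congr rfl fun p' _ => ?_
      rw [Finset.card_filter]
      push_cast
      rfl
    rw [Finset.sum_congr rfl fun p _ => hswap p]
    have hinner : ∀ p : Fin n → F,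
        (∑ p' : Fin n → F, ((univ.filter (fun c : (Fin n → Fin (d + 1)) → F =>
            evalLM p c = 0 ∧ evalLM p' c = 0)).card : ℚ))
        = Q ^ N / Q + (Q ^ n - 1) * (Q ^ N / Q ^ 2) := by
      intro p
      rw [← Finset.add_sum_erase _ _ (Finset.mem_univ p)]
      congr 1
      · have : (univ.filter (fun c : (Fin n → Fin (d + 1)) → F =>
            evalLM p c = 0 ∧ evalLM p c = 0))
            = (univ.filter (fun c : (Fin n → Fin (d + 1)) → F => evalLM p c = 0)) := by
          apply Finset.filter_congr
          intro c _
          simp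
        rw [this, count_one p]
      · rw [Finset.sum_congr rfl (fun p' hp' => count_two hd
          (Ne.symm (Finset.ne_of_mem_erase hp')))]
        rw [Finset.sum_const, nsmul_eq_mul, Finset.card_erase_of_mem (Finset.mem_univ p),
          Finset.card_univ]
        rw [Nat.cast_sub (Fintype.card_pos)]
        push_cast
        rw [hcardPts]
    rw [Finset.sum_congr rfl fun p _ => hinner p, Finset.sum_const, Finset.card_univ,
      nsmul_eq_mul, hcardPts]
    ring
  -- powers
  have hpn : Q ^ n = Q ^ (n - 1) * Q := by
    conv_lhs => rw [show n = (n - 1) + 1 from (Nat.succ_pred_eq_of_pos hn).symm]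
    rw [pow_succ]
  have hQN : (Q : ℚ) ^ N ≠ 0 := pow_ne_zero _ hQ
  constructor
  · rw [hsum1, hpn]
    field_simp
  · rw [hsum1, hsum2, hpn]
    field_simp
    ring
end
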